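/- Let n, m be positive integers, let R be an invertible n×n real matrix, let Φ be an m×n real matrix, let y ∈ ℝᵐ, and let ρ > 0. A vector g* ∈ ℝⁿ is a global minimizer of the robust objective g ↦ sup{ ‖(Φ + Δ)g − y‖ : Δ ∈ ℝ^{m×n}, ‖ΔR‖_F ≤ ρ } if and only if g* is a global minimizer of g ↦ ‖Φg − y‖ + ρ‖R⁻¹g‖. -/

import Mathlib

/-
Substituting `Δ = M R⁻¹` turns the worst-case residual at `g` into the supremum of
`‖r + M u‖` over `‖M‖_F ≤ ρ`, where `r = Φ g - y` and `u = R⁻¹ g`. The triangle inequality and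
Cauchy–Schwarz bound it by `‖r‖ + ρ ‖u‖`, and the rank-one matrix `M = e (ρ / ‖u‖ • u)ᵀ`, with `e`
a unit vector along `r` (any unit vector if `r = 0`, which needs `m > 0`), attains the bound; when
`u = 0` the junk value `ρ / 0 = 0` gives `M = 0`, which still works. So the two objectives agree
pointwise and have the same minimizers.
-/

open Matrix
open scoped BigOperators

noncomputable def euclNorm {k : ℕ} (v : Fin k → ℝ) : ℝ :=
  Real.sqrt (∑ i, (v i) ^ 2)

noncomputable def frobNorm {m n : ℕ} (A : Matrix (Fin m) (Fin n) ℝ) : ℝ :=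
  Real.sqrt (∑ i, ∑ j, (A i j) ^ 2)

theorem exists_norm_eq_one_smul_eq {E : Type*} [NormedAddCommGroup E] [NormedSpace ℝ E]
    [Nontrivial E] (x : E) : ∃ e : E, ‖e‖ = 1 ∧ ‖x‖ • e = x := by
  by_cases hx : x = 0
  · obtain ⟨e, he⟩ := exists_norm_eq E zero_le_one
    exact ⟨e, he, by simp [hx]⟩
  · exact ⟨‖x‖⁻¹ • x, norm_smul_inv_norm hx, smul_inv_smul₀ (norm_ne_zero_iff.2 hx) x⟩

section euclNorm

variable {k : ℕ}

theorem euclNorm_eq_norm (v : Fin k → ℝ) : euclNorm v = ‖WithLp.toLp 2 v‖ := by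
  simp [EuclideanSpace.norm_eq, euclNorm]

theorem euclNorm_nonneg (v : Fin k → ℝ) : 0 ≤ euclNorm v := Real.sqrt_nonneg _

theorem euclNorm_add_le (v w : Fin k → ℝ) : euclNorm (v + w) ≤ euclNorm v + euclNorm w := by
  simpa only [euclNorm_eq_norm, WithLp.toLp_add] using norm_add_le _ _

theorem euclNorm_smul (c : ℝ) (v : Fin k → ℝ) : euclNorm (c • v) = |c| * euclNorm v := by
  rw [euclNorm_eq_norm, euclNorm_eq_norm, WithLp.toLp_smul, norm_smul, Real.norm_eq_abs]

theorem dotProduct_self_eq_euclNorm_sq (v : Fin k → ℝ) : v ⬝ᵥ v = euclNorm v ^ 2 := by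
  rw [euclNorm, Real.sq_sqrt (by positivity)]
  simp [dotProduct, sq]

theorem exists_euclNorm_eq_one_smul_eq (hk : 0 < k) (v : Fin k → ℝ) :
    ∃ e : Fin k → ℝ, euclNorm e = 1 ∧ euclNorm v • e = v := by
  have : Nonempty (Fin k) := ⟨⟨0, hk⟩⟩
  obtain ⟨e, he, hve⟩ := exists_norm_eq_one_smul_eq (WithLp.toLp 2 v)
  refine ⟨e.ofLp, by rwa [euclNorm_eq_norm], ?_⟩
  rw [euclNorm_eq_norm]
  simpa using congrArg WithLp.ofLp hve

end euclNorm

section frobNorm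

variable {m n : ℕ}

theorem frobNorm_vecMulVec (v : Fin m → ℝ) (w : Fin n → ℝ) :
    frobNorm (vecMulVec v w) = euclNorm v * euclNorm w := by
  rw [frobNorm, euclNorm, euclNorm, ← Real.sqrt_mul (by positivity), Finset.sum_mul_sum]
  simp [vecMulVec_apply, mul_pow]

theorem euclNorm_mulVec_le (M : Matrix (Fin m) (Fin n) ℝ) (v : Fin n → ℝ) :
    euclNorm (M *ᵥ v) ≤ frobNorm M * euclNorm v := by
  rw [euclNorm, euclNorm, frobNorm, ← Real.sqrt_mul (by positivity), Finset.sum_mul]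
  gcongr with i
  exact Finset.sum_mul_sq_le_sq_mul_sq Finset.univ (M i) v

end frobNorm

theorem isGreatest_euclNorm_add_mulVec {m n : ℕ} (hm : 0 < m) {ρ : ℝ} (hρ : 0 ≤ ρ)
    (r : Fin m → ℝ) (u : Fin n → ℝ) :
    IsGreatest ((fun M => euclNorm (r + M *ᵥ u)) '' {M | frobNorm M ≤ ρ})
      (euclNorm r + ρ * euclNorm u) := by
  constructor
  · obtain ⟨e, he, hre⟩ := exists_euclNorm_eq_one_smul_eq hm r
    have ⟨hbound, hcoeff⟩ : ρ / euclNorm u * euclNorm u ≤ ρ ∧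
        ρ / euclNorm u * euclNorm u ^ 2 = ρ * euclNorm u := by
      rcases (euclNorm_nonneg u).eq_or_lt with hu | hu
      · simp [← hu, hρ]
      · constructor
        · rw [div_mul_cancel₀ _ hu.ne']
        · field_simp
    refine ⟨vecMulVec e ((ρ / euclNorm u) • u), ?_, ?_⟩
    · rw [Set.mem_ofPred_eq, frobNorm_vecMulVec, he, one_mul, euclNorm_smul,
        abs_of_nonneg (div_nonneg hρ (euclNorm_nonneg u))]
      exact hbound
    · dsimp only
      rw [vecMulVec_mulVec, op_smul_eq_smul, smul_dotProduct, dotProduct_self_eq_euclNorm_sq,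
        smul_eq_mul, hcoeff]
      conv_lhs => rw [← hre, ← add_smul, euclNorm_smul, he, mul_one]
      exact abs_of_nonneg (add_nonneg (euclNorm_nonneg r) (mul_nonneg hρ (euclNorm_nonneg u)))
  · rintro _ ⟨M, hM, rfl⟩
    calc euclNorm (r + M *ᵥ u) ≤ euclNorm r + euclNorm (M *ᵥ u) := euclNorm_add_le _ _
      _ ≤ euclNorm r + frobNorm M * euclNorm u := by gcongr; exact euclNorm_mulVec_le M u
      _ ≤ euclNorm r + ρ * euclNorm u := by gcongr; exacts [euclNorm_nonneg u, hM]

theorem sSup_robust_residual_eq {m n : ℕ} (hm : 0 < m) (R : Matrix (Fin n) (Fin n) ℝ)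
    (hR : IsUnit R.det) (Φ : Matrix (Fin m) (Fin n) ℝ) (y : Fin m → ℝ) {ρ : ℝ} (hρ : 0 ≤ ρ)
    (g : Fin n → ℝ) :
    sSup ((fun Δ => euclNorm ((Φ + Δ) *ᵥ g - y)) '' {Δ | frobNorm (Δ * R) ≤ ρ}) =
      euclNorm (Φ *ᵥ g - y) + ρ * euclNorm (R⁻¹ *ᵥ g) := by
  have hball : {Δ : Matrix (Fin m) (Fin n) ℝ | frobNorm (Δ * R) ≤ ρ} =
      (fun M : Matrix (Fin m) (Fin n) ℝ => M * R⁻¹) '' {M | frobNorm M ≤ ρ} := by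
    ext Δ
    constructor
    · exact fun hΔ => ⟨Δ * R, hΔ, mul_nonsing_inv_cancel_right R Δ hR⟩
    · rintro ⟨M, hM, rfl⟩
      rwa [Set.mem_ofPred_eq, nonsing_inv_mul_cancel_right R M hR]
  rw [hball, Set.image_image]
  have hresidual : ∀ M : Matrix (Fin m) (Fin n) ℝ,
      (Φ + M * R⁻¹) *ᵥ g - y = (Φ *ᵥ g - y) + M *ᵥ (R⁻¹ *ᵥ g) := fun M => by
    rw [add_mulVec, mulVec_mulVec]
    abel
  simp only [hresidual]
  exact (isGreatest_euclNorm_add_mulVec hm hρ _ _).csSup_eq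

theorem robust_LS_iff_regularized_form_general
    (n m : ℕ) (hm : 0 < m)
    (R : Matrix (Fin n) (Fin n) ℝ) (hR : IsUnit R.det)
    (Φ : Matrix (Fin m) (Fin n) ℝ) (y : Fin m → ℝ)
    (ρ : ℝ) (hρ : 0 < ρ) (gstar : Fin n → ℝ) :
    (∀ g : Fin n → ℝ,
        sSup ((fun Δ => euclNorm ((Φ + Δ) *ᵥ gstar - y)) ''
            {Δ : Matrix (Fin m) (Fin n) ℝ | frobNorm (Δ * R) ≤ ρ}) ≤
          sSup ((fun Δ => euclNorm ((Φ + Δ) *ᵥ g - y)) ''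
            {Δ : Matrix (Fin m) (Fin n) ℝ | frobNorm (Δ * R) ≤ ρ})) ↔
      (∀ g : Fin n → ℝ,
        euclNorm (Φ *ᵥ gstar - y) + ρ * euclNorm (R⁻¹ *ᵥ gstar) ≤
          euclNorm (Φ *ᵥ g - y) + ρ * euclNorm (R⁻¹ *ᵥ g)) := by
  simp only [sSup_robust_residual_eq hm R hR Φ y hρ.le]

/-- The robust least-squares problem and the problem of minimizing
‖Φg − y‖ + ρ‖R⁻¹g‖ have the same global minimizers. -/
theorem robust_LS_iff_regularized_form
    (n m : ℕ) (hn : 0 < n) (hm : 0 < m)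
    (R : Matrix (Fin n) (Fin n) ℝ) (hR : IsUnit R.det)
    (Φ : Matrix (Fin m) (Fin n) ℝ) (y : Fin m → ℝ)
    (ρ : ℝ) (hρ : 0 < ρ) (gstar : Fin n → ℝ) :
    (∀ g : Fin n → ℝ,
        sSup ((fun Δ => euclNorm ((Φ + Δ) *ᵥ gstar - y)) ''
            {Δ : Matrix (Fin m) (Fin n) ℝ | frobNorm (Δ * R) ≤ ρ}) ≤
          sSup ((fun Δ => euclNorm ((Φ + Δ) *ᵥ g - y)) ''
            {Δ : Matrix (Fin m) (Fin n) ℝ | frobNorm (Δ * R) ≤ ρ})) ↔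
      (∀ g : Fin n → ℝ,
        euclNorm (Φ *ᵥ gstar - y) + ρ * euclNorm (R⁻¹ *ᵥ gstar) ≤
          euclNorm (Φ *ᵥ g - y) + ρ * euclNorm (R⁻¹ *ᵥ g)) :=
  robust_LS_iff_regularized_form_general n m hm R hR Φ y ρ hρ gstar
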